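/- Let ω be the linear order on the columns of L_m in which later columns are ω-smaller (i.e. ω = (n, n−1, …, 1, 0)). Then every ω-broken circuit of the matroid M(L_m) contains a 2-element minimal broken circuit, and the minimal broken circuits are exactly the pairs of columns {e_j − e_i, e_k − e_i} with i < j < k and the pairs {e_i, e_j} with i < j. Consequently, the broken-circuit matroid M^ω(L_m) is represented by the matrix with the same block structure as L_m whose blocks are the identity columns (e_1, e_2 | e_1, e_2, e_3 | ⋯ | e_1, …, e_{m−2}), its bases are the column subsets forming the standard basis {e_1,…,e_{m−2}}, and their number is (m−3)·(m−3)!. -/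

import Mathlib

open scoped BigOperators
noncomputable section

namespace ScatteringPaper

open CategoryTheory AlgebraicTopology

/- ## Topological Euler characteristic via rational singular homology -/

/-- The singular chain complex of a topological space, with rational coefficients. -/
def singularChainComplex (X : Type) [TopologicalSpace X] : ChainComplex (ModuleCat ℚ) ℕ :=
  (alternatingFaceMapComplex (ModuleCat ℚ)).obj
    (((SimplicialObject.whiskering _ _).obj (ModuleCat.free ℚ)).obj (TopCat.toSSet.obj (TopCat.of X)))

/-- The `q`-th (rational) Betti number of a topological space. -/
def betti (X : Type) [TopologicalSpace X] (q : ℕ) : ℕ :=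
  Module.finrank ℚ ((singularChainComplex X).homology q)

/-- The topological Euler characteristic, as the alternating sum of Betti numbers. -/
def eulerChar (X : Type) [TopologicalSpace X] : ℤ :=
  ∑ᶠ q : ℕ, (-1 : ℤ) ^ q * (betti X q : ℤ)

variable {d : ℕ} {ι : Type} [Fintype ι] [DecidableEq ι]

/- ## Hyperplane arrangements: `(ℓ_i(x))_i = (1, x_1, …, x_d) · L` -/

/-- Value of the affine-linear form encoded by column `i` of `L`. -/
def ell (K : Type) [Field K] (L : Matrix (Fin (d+1)) ι K) (x : Fin d → K) (i : ι) : K :=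
  L 0 i + ∑ j : Fin d, x j * L j.succ i

/-- The complement `X = ℂ^d ∖ 𝒜` of the arrangement `𝒜 = V(∏ ℓ_i)`. -/
def complementX (L : Matrix (Fin (d+1)) ι ℂ) : Set (Fin d → ℂ) := {x | ∀ i, ell ℂ L x i ≠ 0}

/-- `x ∈ X` is a solution of the scattering equations
`∂ℒ_u/∂x_k = ∑_i u_i a_{ki}/ℓ_i(x) = 0`, `k = 1, …, d`. -/
def IsSol (L : Matrix (Fin (d+1)) ι ℂ) (u : ι → ℂ) (x : Fin d → ℂ) : Prop :=
  x ∈ complementX L ∧ ∀ k : Fin d, ∑ i : ι, u i * L k.succ i / ell ℂ L x i = 0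

/-- An arrangement is essential if some subset of its hyperplanes meets in a single point. -/
def IsEssential (L : Matrix (Fin (d+1)) ι ℂ) : Prop :=
  ∃ (S : Set ι) (x₀ : Fin d → ℂ), {x : Fin d → ℂ | ∀ i ∈ S, ell ℂ L x i = 0} = {x₀}

/-- `P u` holds for all `u` outside a proper algebraic subset (i.e. for generic `u`). -/
def Generically {σ : Type} [Fintype σ] [DecidableEq σ] (P : (σ → ℂ) → Prop) : Prop :=
  ∃ g : MvPolynomial σ ℂ, g ≠ 0 ∧ ∀ u : σ → ℂ, MvPolynomial.eval u g ≠ 0 → P u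

/- ## Matroid data of the columns of `L` -/

/-- Rank of the set `I` of columns of `L` (the matroid rank in `M(L)`). -/
def rkL (K : Type) [Field K] (L : Matrix (Fin (d+1)) ι K) (I : Set ι) : ℕ :=
  Module.finrank K (Submodule.span K ((fun i => fun r => L r i) '' I))

/-- Rank of the set `I` of columns of `A^⊤` (`L` with its first row deleted). -/
def rkA (K : Type) [Field K] (L : Matrix (Fin (d+1)) ι K) (I : Set ι) : ℕ :=
  Module.finrank K (Submodule.span K ((fun i => fun k : Fin d => L k.succ i) '' I))

/-- `I` is a flat of the matroid `M(L)`. -/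
def IsFlat (K : Type) [Field K] (L : Matrix (Fin (d+1)) ι K) (I : Set ι) : Prop :=
  ∀ i ∉ I, rkL K L I < rkL K L (insert i I)

/-- `C` is a circuit of `M(L)`: a minimal linearly dependent set of columns. -/
def IsCircuit (K : Type) [Field K] (L : Matrix (Fin (d+1)) ι K) (C : Finset ι) : Prop :=
  (¬ LinearIndependent K (fun i : {a // a ∈ C} => fun r => L r i.1)) ∧
  ∀ D : Finset ι, D ⊂ C → LinearIndependent K (fun i : {a // a ∈ D} => fun r => L r i.1)

/-- `M(L)` is connected: there is no separation into two nonempty parts with additive rank. -/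
def MatroidConnected (K : Type) [Field K] (L : Matrix (Fin (d+1)) ι K) : Prop :=
  ∀ S : Set ι, S.Nonempty → Sᶜ.Nonempty → rkL K L S + rkL K L Sᶜ ≠ rkL K L Set.univ

/- ## The reciprocal linear space -/

/-- Zariski closure of a subset of affine space `K^ι`. -/
def zarClosure (K : Type) [Field K] (S : Set (ι → K)) : Set (ι → K) :=
  {v | ∀ f : MvPolynomial ι K, (∀ w ∈ S, MvPolynomial.eval w f = 0) → MvPolynomial.eval v f = 0}

/-- The affine cone over the image of `φ : x ↦ (ℓ_0(x)⁻¹ : ⋯ : ℓ_n(x)⁻¹)`. -/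
def coneImage (L : Matrix (Fin (d+1)) ι ℂ) : Set (ι → ℂ) :=
  {v | ∃ (c : ℂ) (x : Fin d → ℂ), x ∈ complementX L ∧ v = fun i => c / ell ℂ L x i}

/-- The vanishing ideal of a subset of affine space. -/
def vanishingIdeal (K : Type) [Field K] (S : Set (ι → K)) : Ideal (MvPolynomial ι K) where
  carrier := {f | ∀ v ∈ S, MvPolynomial.eval v f = 0}
  add_mem' := by
    intro a b ha hb v hv
    simp [map_add, ha v hv, hb v hv]
  zero_mem' := by intro v hv; simp
  smul_mem' := by
    intro c f hf v hv
    simp [smul_eq_mul, map_mul, hf v hv]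

/-- Projective space `ℙ^n = ℙ(ℂ^ι)`. -/
abbrev Pn (ι : Type) [Fintype ι] := Projectivization ℂ (ι → ℂ)

/-- The reciprocal linear space `ℛ_L ⊂ ℙ^n`, the Zariski closure of `im φ`. -/
def RL (L : Matrix (Fin (d+1)) ι ℂ) : Set (Pn ι) :=
  {p | p.rep ∈ zarClosure ℂ (coneImage L)}

/-- The linear space `𝕃_u = {y : A^⊤ diag(u) y = 0} ⊂ ℙ^n`. -/
def LuSet (L : Matrix (Fin (d+1)) ι ℂ) (u : ι → ℂ) : Set (Pn ι) :=
  {p | ∀ k : Fin d, ∑ i : ι, L k.succ i * u i * p.rep i = 0}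

/-- The torus orbit `U_I = {y ∈ ℙ^n : y_i ≠ 0 ⇔ i ∈ I}`. -/
def Ustratum (I : Set ι) : Set (Pn ι) := {p : Pn ι | ∀ i : ι, p.rep i ≠ 0 ↔ i ∈ I}

/-- `p = φ(x)` for the map `φ : x ↦ (ℓ_0(x)⁻¹ : ⋯ : ℓ_n(x)⁻¹)`. -/
def PhiRel (L : Matrix (Fin (d+1)) ι ℂ) (x : Fin d → ℂ) (p : Pn ι) : Prop :=
  ∃ hv : (fun i => (ell ℂ L x i)⁻¹) ≠ 0, p = Projectivization.mk ℂ (fun i => (ell ℂ L x i)⁻¹) hv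

/-- The image of `φ` in `ℙ^n`. -/
def imPhi (L : Matrix (Fin (d+1)) ι ℂ) : Set (Pn ι) :=
  {p | ∃ x ∈ complementX L, PhiRel L x p}

/-- Complement of the subarrangement `𝒜_I`. -/
def subComplement (L : Matrix (Fin (d+1)) ι ℂ) (I : Set ι) : Set (Fin d → ℂ) :=
  {x | ∀ i ∈ I, ell ℂ L x i ≠ 0}

/-- The affine cone over the image of the reciprocal map of the subarrangement indexed by `I`,
embedded in the coordinate subspace `{y_i = 0, i ∉ I}`. -/
def coneImageSub (L : Matrix (Fin (d+1)) ι ℂ) (I : Set ι) : Set (ι → ℂ) :=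
  {v | ∃ (c : ℂ) (x : Fin d → ℂ), x ∈ subComplement L I ∧
      v = I.indicator (fun i => c / ell ℂ L x i)}

/-- The reciprocal linear space `ℛ_{L_I}` of the submatrix `L_I`, embedded in `ℙ^n`. -/
def RLsub (L : Matrix (Fin (d+1)) ι ℂ) (I : Set ι) : Set (Pn ι) :=
  {p | p.rep ∈ zarClosure ℂ (coneImageSub L I)}

/-- The open stratum `ℛ_{L_I}^∘ = ℛ_{L_I} ∩ U_I`. -/
def RLsubOpen (L : Matrix (Fin (d+1)) ι ℂ) (I : Set ι) : Set (Pn ι) :=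
  RLsub L I ∩ Ustratum I

/- ## The very affine variety `X_I = (ℂ^d ∖ 𝒜_I)/K_I` -/

/-- Quotient of `ℂ^d ∖ 𝒜_I` by translation by the left kernel `K_I` of `A_I^⊤`:
two points are identified iff `A_I^⊤` takes the same values on them. -/
def XIsetoid (L : Matrix (Fin (d+1)) ι ℂ) (I : Set ι) : Setoid ↥(subComplement L I) where
  r x y := ∀ i ∈ I, ∑ k : Fin d, (x : Fin d → ℂ) k * L k.succ i
      = ∑ k : Fin d, (y : Fin d → ℂ) k * L k.succ i
  iseqv := ⟨fun _ _ _ => rfl, fun h i hi => (h i hi).symm, fun h1 h2 i hi => (h1 i hi).trans (h2 i hi)⟩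

/-- The very affine variety `X_I = (ℂ^d ∖ 𝒜_I)/K_I`. -/
def XI (L : Matrix (Fin (d+1)) ι ℂ) (I : Set ι) : Type := Quotient (XIsetoid L I)

instance (L : Matrix (Fin (d+1)) ι ℂ) (I : Set ι) : TopologicalSpace (XI L I) :=
  instTopologicalSpaceQuotient

/-- The complement of the arrangement, over a general field `K`. -/
def complementK (K : Type) [Field K] (L : Matrix (Fin (d+1)) ι K) : Set (Fin d → K) :=
  {x | ∀ i, ell K L x i ≠ 0}

/-- The affine cone over the image of the reciprocal map, over a general field `K`. -/
def coneImageK (K : Type) [Field K] (L : Matrix (Fin (d+1)) ι K) : Set (ι → K) :=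
  {v | ∃ (c : K) (x : Fin d → K), x ∈ complementK K L ∧ v = fun i => c / ell K L x i}

/- ## Hilbert functions, degree, Hilbert regularity -/

/-- The Hilbert function of the graded algebra `K[y]/I`:
`q ↦ dim_K (K[y]/I)_q`. -/
def hilb (K : Type) [Field K] (I : Ideal (MvPolynomial ι K)) (q : ℕ) : ℕ :=
  Module.finrank K ((MvPolynomial.homogeneousSubmodule ι K q).map
    (Ideal.Quotient.mkₐ K I).toLinearMap)

/-- `k` is the degree of the `d`-dimensional projective variety with homogeneous
coordinate ring `K[y]/I`: the Hilbert polynomial has degree `d` and leading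
coefficient `k/d!`. -/
def IsProjDegree (K : Type) [Field K] (I : Ideal (MvPolynomial ι K)) (d k : ℕ) : Prop :=
  ∃ P : Polynomial ℚ, (∃ N : ℕ, ∀ q : ℕ, N ≤ q → Polynomial.eval (q : ℚ) P = hilb K I q) ∧
    P.degree = (d : WithBot ℕ) ∧ P.leadingCoeff = (k : ℚ) / (Nat.factorial d : ℚ)

/-- The Hilbert function, extended by `0` to negative integers. -/
def HFZ (K : Type) [Field K] (I : Ideal (MvPolynomial ι K)) (q : ℤ) : ℕ :=
  if 0 ≤ q then hilb K I q.toNat else 0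

/-- The Hilbert regularity: the smallest degree from which the Hilbert function
agrees with a (necessarily unique) polynomial. -/
def HReg (K : Type) [Field K] (I : Ideal (MvPolynomial ι K)) : ℤ :=
  sInf {i : ℤ | ∃ P : Polynomial ℚ, ∀ q : ℤ, i ≤ q → Polynomial.eval (q : ℚ) P = HFZ K I q}

/-- Column indices of the matrix `L_m`: pairs `0 ≤ a < b ≤ m-2` of labels of the `m-1` finite
points `z_0 = 0, z_1 = 1, z_{k+1} = x_k (k = 1, …, m-3)` on the line, except the pair `(0,1)`
(whose minor `p_{12}` is constant).  The column `(a,b)` encodes the linear form `z_b − z_a`. -/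
def ColIdx (m : ℕ) : Type :=
  {p : Fin (m-1) × Fin (m-1) // p.1 < p.2 ∧ ¬((p.1 : ℕ) = 0 ∧ (p.2 : ℕ) = 1)}

instance (m : ℕ) : Fintype (ColIdx m) := by unfold ColIdx; infer_instance
instance (m : ℕ) : DecidableEq (ColIdx m) := by unfold ColIdx; infer_instance

/-- Coefficient vector of the point `z_t` in the coordinates `(1, x_1, …, x_{m-3})`. -/
def zCoeff (m : ℕ) (t : Fin (m-1)) : Fin (m-3+1) → ℂ :=
  fun r => if (t : ℕ) = (r : ℕ) + 1 then 1 else 0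

/-- The `(m-2) × (m(m-3)/2)` coefficient matrix `L_m` of the hyperplane arrangement model of
`𝓜_{0,m}`: column `(a,b)` is the coefficient vector of `z_b − z_a`. -/
def Lm (m : ℕ) : Matrix (Fin (m-3+1)) (ColIdx m) ℂ :=
  Matrix.of fun r c => zCoeff m c.1.2 r - zCoeff m c.1.1 r
/-- The column order on `L_m`: columns are sorted block by block, so `c` comes before `c'`
iff `c` has smaller block (second entry) or the same block and smaller first entry.
The weight `ω = (n, …, 1, 0)` makes later columns `ω`-smaller. -/
def colBefore {m : ℕ} (c c' : ColIdx m) : Prop :=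
  c.1.2 < c'.1.2 ∨ (c.1.2 = c'.1.2 ∧ c.1.1 < c'.1.1)

/-- `B` is an `ω`-broken circuit of `M(L_m)`: a circuit with its `ω`-minimal element (i.e.
its last column in the column order) removed. -/
def IsBC (m : ℕ) (B : Finset (ColIdx m)) : Prop :=
  ∃ (C : Finset (ColIdx m)) (i : ColIdx m), IsCircuit ℂ (Lm m) C ∧ i ∈ C ∧
    (∀ j ∈ C, j ≠ i → colBefore j i) ∧ B = C.erase i

/-- `B` is an inclusion-minimal broken circuit (a circuit of `M^ω(L_m)`). -/
def IsMinBC (m : ℕ) (B : Finset (ColIdx m)) : Prop :=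
  IsBC m B ∧ ∀ B' : Finset (ColIdx m), IsBC m B' → B' ⊆ B → B' = B

/-- `S` is independent in the broken-circuit matroid `M^ω(L_m)`. -/
def MwIndepLm (m : ℕ) (S : Finset (ColIdx m)) : Prop :=
  ∀ B : Finset (ColIdx m), IsMinBC m B → ¬ B ⊆ S

/-- `B` is a basis of `M^ω(L_m)`. -/
def MwBasisLm (m : ℕ) (B : Finset (ColIdx m)) : Prop :=
  MwIndepLm m B ∧ ∀ S : Finset (ColIdx m), MwIndepLm m S → B ⊆ S → S = B

/-- The representing matrix of `M^ω(L_m)`: the column `(a,b)` is sent to the standard basis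
vector `e_a` (the blocks of `L_m` are replaced by identity blocks). -/
def reprVec (m : ℕ) (c : ColIdx m) : Fin (m-3+1) → ℂ :=
  fun r => if (r : ℕ) = (c.1.1 : ℕ) then 1 else 0

/- ## Auxiliary development for Statement 19 -/

section Aux19

variable {n : ℕ}

lemma Lm_apply (r : Fin (n+2)) (c : ColIdx (n+4)) :
    Lm (n+4) r c = (if (c.1.2 : ℕ) = (r : ℕ)+1 then (1:ℂ) else 0)
      - (if (c.1.1 : ℕ) = (r : ℕ)+1 then 1 else 0) := rfl

lemma col_a_lt_b (c : ColIdx (n+4)) : (c.1.1 : ℕ) < (c.1.2 : ℕ) := c.2.1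

lemma col_b_le (c : ColIdx (n+4)) : (c.1.2 : ℕ) ≤ n+2 := Nat.lt_succ_iff.mp c.1.2.isLt

lemma col_a_lt (c : ColIdx (n+4)) : (c.1.1 : ℕ) < n+2 :=
  lt_of_lt_of_le (col_a_lt_b c) (col_b_le c)

/-- The "vertex incidence" value of column `c` at vertex `t`. -/
def vt (t : Fin (n+3)) (c : ColIdx (n+4)) : ℂ :=
  (if c.1.2 = t then 1 else 0) - (if c.1.1 = t then 1 else 0)

lemma vertexSum (C : Finset (ColIdx (n+4))) (lam : ColIdx (n+4) → ℂ)
    (h : ∀ r : Fin (n+2), ∑ c ∈ C, lam c * Lm (n+4) r c = 0) (t : Fin (n+3)) :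
    ∑ c ∈ C, lam c * vt t c = 0 := by
  have ind_sum : ∀ x : ℕ, 1 ≤ x → x ≤ n+2 →
      ∑ r : Fin (n+2), (if x = (r : ℕ)+1 then (1:ℂ) else 0) = 1 := by
    intro x hx1 hx2
    rw [Fin.sum_univ_eq_sum_range (fun r => if x = r+1 then (1:ℂ) else 0)]
    rw [Finset.sum_eq_single (x-1)]
    · rw [if_pos (by omega)]
    · intro r _ hr; rw [if_neg (by omega)]
    · intro hx; exact absurd (Finset.mem_range.mpr (by omega)) hx
  have ind_sum0 : ∀ x : ℕ, x = 0 →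
      ∑ r : Fin (n+2), (if x = (r : ℕ)+1 then (1:ℂ) else 0) = 0 := by
    intro x hx
    apply Finset.sum_eq_zero
    intro r _; rw [if_neg (by omega)]
  rcases Nat.eq_zero_or_pos (t : ℕ) with ht | ht
  · -- vertex 0 : sum all coordinates
    have hsum : ∑ r : Fin (n+2), ∑ c ∈ C, lam c * Lm (n+4) r c = 0 := by
      simp [h]
    rw [Finset.sum_comm] at hsum
    have hcongr : ∀ c ∈ C, ∑ r : Fin (n+2), lam c * Lm (n+4) r c = - (lam c * vt t c) := by
      intro c _
      rw [← Finset.mul_sum]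
      have hb1 : 1 ≤ (c.1.2 : ℕ) := by have := col_a_lt_b c; omega
      have hL : ∑ r : Fin (n+2), Lm (n+4) r c = - vt t c := by
        simp only [Lm_apply, Finset.sum_sub_distrib]
        rw [ind_sum _ hb1 (col_b_le c)]
        have hb : ¬ (c.1.2 = t) := by
          intro hc
          have : (c.1.2 : ℕ) = (t : ℕ) := by rw [hc]
          omega
        rw [vt, if_neg hb]
        rcases Nat.eq_zero_or_pos (c.1.1 : ℕ) with h0 | h0
        · rw [ind_sum0 _ h0, if_pos (Fin.ext (by omega))]
          norm_num
        · rw [ind_sum _ h0 (by have := col_a_lt c; omega)]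
          rw [if_neg (fun hc => by
            have : (c.1.1 : ℕ) = (t : ℕ) := by rw [hc]
            omega)]
          norm_num
      rw [hL]; ring
    rw [Finset.sum_congr rfl hcongr, Finset.sum_neg_distrib] at hsum
    exact neg_eq_zero.mp hsum
  · -- vertex t ≥ 1 : coordinate t-1
    have htlt : (t : ℕ) - 1 < n + 2 := by have := t.isLt; omega
    have hr := h ⟨(t : ℕ) - 1, htlt⟩
    have : ∀ c ∈ C, lam c * Lm (n+4) ⟨(t : ℕ) - 1, htlt⟩ c = lam c * vt t c := by
      intro c _
      congr 1
      rw [Lm_apply, vt]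
      have hb : ((c.1.2 : ℕ) = ((t:ℕ)-1)+1) ↔ (c.1.2 = t) := by
        rw [Fin.ext_iff]; omega
      have ha : ((c.1.1 : ℕ) = ((t:ℕ)-1)+1) ↔ (c.1.1 = t) := by
        rw [Fin.ext_iff]; omega
      simp only [hb, ha]
    rw [Finset.sum_congr rfl this] at hr
    exact hr

lemma deg_one (C : Finset (ColIdx (n+4))) (lam : ColIdx (n+4) → ℂ)
    (h : ∀ r : Fin (n+2), ∑ c ∈ C, lam c * Lm (n+4) r c = 0)
    (t : Fin (n+3)) (c0 : ColIdx (n+4)) (hc0 : c0 ∈ C) (hinc : c0.1.1 = t ∨ c0.1.2 = t)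
    (huniq : ∀ c ∈ C, (c.1.1 = t ∨ c.1.2 = t) → c = c0) : lam c0 = 0 := by
  have hv := vertexSum C lam h t
  rw [Finset.sum_eq_single_of_mem c0 hc0] at hv
  · have hvt : vt t c0 ≠ 0 := by
      have hab := col_a_lt_b c0
      rcases hinc with h1 | h1
      · have : ¬ (c0.1.2 = t) := by
          intro hc; rw [← h1] at hc
          have : (c0.1.2 : ℕ) = (c0.1.1 : ℕ) := by rw [hc]
          omega
        simp [vt, this, h1]
      · have : ¬ (c0.1.1 = t) := by
          intro hc; rw [← h1] at hc
          have : (c0.1.1 : ℕ) = (c0.1.2 : ℕ) := by rw [hc]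
          omega
        simp [vt, this, h1]
    exact (mul_eq_zero.mp hv).resolve_right hvt
  · intro c hc hne
    have h1 : ¬ (c.1.1 = t) := fun hh => hne (huniq c hc (Or.inl hh))
    have h2 : ¬ (c.1.2 = t) := fun hh => hne (huniq c hc (Or.inr hh))
    simp [vt, h1, h2]

lemma rel_iff (D : Finset (ColIdx (n+4))) (lam : ColIdx (n+4) → ℂ) :
    (∑ i : {a // a ∈ D}, lam i.1 • (fun r : Fin (n+2) => Lm (n+4) r i.1)) = 0 ↔
      ∀ r : Fin (n+2), ∑ c ∈ D, lam c * Lm (n+4) r c = 0 := by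
  rw [Finset.sum_coe_sort D (fun c => lam c • (fun r : Fin (n+2) => Lm (n+4) r c))]
  rw [funext_iff]
  constructor
  · intro hfun r
    have := hfun r
    simpa [Finset.sum_apply] using this
  · intro hr r
    simpa [Finset.sum_apply] using hr r

/-- Distinct columns have a vertex private to one of them. -/
lemma exists_private (c c' : ColIdx (n+4)) (hne : c ≠ c') :
    ∃ t : Fin (n+3), ∃ e ∈ ({c, c'} : Finset (ColIdx (n+4))),
      (e.1.1 = t ∨ e.1.2 = t) ∧
      ∀ e' ∈ ({c, c'} : Finset (ColIdx (n+4))), (e'.1.1 = t ∨ e'.1.2 = t) → e' = e := by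
  have hab := col_a_lt_b c
  have hab' := col_a_lt_b c'
  have hpair : ∀ e' : ColIdx (n+4), e' ∈ ({c, c'} : Finset (ColIdx (n+4))) ↔ e' = c ∨ e' = c' := by
    intro e'; simp
  have key : ∀ (x y : ColIdx (n+4)), x ≠ y →
      (∃ t : Fin (n+3), (x.1.1 = t ∨ x.1.2 = t) ∧ ¬(y.1.1 = t) ∧ ¬(y.1.2 = t)) ∨
      (∃ t : Fin (n+3), (y.1.1 = t ∨ y.1.2 = t) ∧ ¬(x.1.1 = t) ∧ ¬(x.1.2 = t)) := by
    intro x y hxy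
    have h1 := col_a_lt_b x
    have h2 := col_a_lt_b y
    have hne2 : (x.1.1 : ℕ) ≠ (y.1.1 : ℕ) ∨ (x.1.2 : ℕ) ≠ (y.1.2 : ℕ) := by
      by_contra hcon
      push_neg at hcon
      apply hxy
      apply Subtype.ext
      exact Prod.ext (Fin.ext hcon.1) (Fin.ext hcon.2)
    rcases Nat.lt_trichotomy (x.1.2 : ℕ) (y.1.2 : ℕ) with hb | hb | hb
    · right
      refine ⟨y.1.2, Or.inr rfl, ?_, ?_⟩
      · intro hc; have : (x.1.1 : ℕ) = (y.1.2 : ℕ) := congrArg Fin.val hc; omega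
      · intro hc; have : (x.1.2 : ℕ) = (y.1.2 : ℕ) := congrArg Fin.val hc; omega
    · -- equal second labels, distinct first labels
      have ha : (x.1.1 : ℕ) ≠ (y.1.1 : ℕ) := by
        rcases hne2 with h | h
        · exact h
        · exact absurd hb h
      rcases Nat.lt_or_ge (x.1.1 : ℕ) (y.1.1 : ℕ) with hlt | hge
      · right
        refine ⟨y.1.1, Or.inl rfl, ?_, ?_⟩
        · intro hc; have : (x.1.1 : ℕ) = (y.1.1 : ℕ) := congrArg Fin.val hc; omega
        · intro hc; have : (x.1.2 : ℕ) = (y.1.1 : ℕ) := congrArg Fin.val hc; omega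
      · left
        have hlt : (y.1.1 : ℕ) < (x.1.1 : ℕ) := by omega
        refine ⟨x.1.1, Or.inl rfl, ?_, ?_⟩
        · intro hc; have : (y.1.1 : ℕ) = (x.1.1 : ℕ) := congrArg Fin.val hc; omega
        · intro hc; have : (y.1.2 : ℕ) = (x.1.1 : ℕ) := congrArg Fin.val hc; omega
    · left
      refine ⟨x.1.2, Or.inr rfl, ?_, ?_⟩
      · intro hc; have : (y.1.1 : ℕ) = (x.1.2 : ℕ) := congrArg Fin.val hc; omega
      · intro hc; have : (y.1.2 : ℕ) = (x.1.2 : ℕ) := congrArg Fin.val hc; omega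
  rcases key c c' hne with ⟨t, hinc, hn1, hn2⟩ | ⟨t, hinc, hn1, hn2⟩
  · refine ⟨t, c, by simp, hinc, ?_⟩
    intro e' he' hinc'
    rcases (hpair e').mp he' with rfl | rfl
    · rfl
    · exact absurd hinc' (by tauto)
  · refine ⟨t, c', by simp, hinc, ?_⟩
    intro e' he' hinc'
    rcases (hpair e').mp he' with rfl | rfl
    · exact absurd hinc' (by tauto)
    · rfl

lemma lam_zero_of_small (D : Finset (ColIdx (n+4))) (hD : D.card ≤ 2)
    (lam : ColIdx (n+4) → ℂ)
    (h : ∀ r : Fin (n+2), ∑ c ∈ D, lam c * Lm (n+4) r c = 0) :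
    ∀ c ∈ D, lam c = 0 := by
  -- single-column case
  have single : ∀ (c0 : ColIdx (n+4)) (lam' : ColIdx (n+4) → ℂ),
      (∀ r : Fin (n+2), ∑ c ∈ ({c0} : Finset (ColIdx (n+4))), lam' c * Lm (n+4) r c = 0) →
      lam' c0 = 0 := by
    intro c0 lam' h'
    exact deg_one _ lam' h' c0.1.2 c0 (Finset.mem_singleton_self c0) (Or.inr rfl)
      (fun c hc _ => Finset.mem_singleton.mp hc)
  intro c hc
  rcases Finset.eq_singleton_or_nontrivial hc with hsing | hnt
  · exact single c lam (by rw [← hsing]; exact h)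
  · obtain ⟨c', hc', hcc'⟩ : ∃ c' ∈ D, c' ≠ c := by
      obtain ⟨x, hx, y, hy, hxy⟩ := hnt
      rcases em (x = c) with rfl | hxc
      · exact ⟨y, hy, fun hh => hxy hh.symm⟩
      · exact ⟨x, hx, hxc⟩
    have hDeq : D = {c, c'} := by
      refine (Finset.eq_of_subset_of_card_le ?_ ?_).symm
      · intro x hx
        rcases Finset.mem_insert.mp hx with h1 | h1
        · rw [h1]; exact hc
        · rw [Finset.mem_singleton.mp h1]; exact hc'
      · rw [Finset.card_pair (Ne.symm hcc')]; exact hD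
    obtain ⟨t, e, he, hinc, huniq⟩ := exists_private c c' (Ne.symm hcc')
    rw [← hDeq] at he huniq
    have hle : lam e = 0 := deg_one _ lam h t e he hinc huniq
    obtain ⟨f, hfe, hset⟩ : ∃ f, f ≠ e ∧ D = ({e, f} : Finset (ColIdx (n+4))) := by
      have he2 : e = c ∨ e = c' := by
        rw [hDeq] at he
        simpa using he
      rcases he2 with he2 | he2
      · exact ⟨c', by rw [he2]; exact hcc', by rw [hDeq, he2]⟩
      · exact ⟨c, by rw [he2]; exact Ne.symm hcc', by rw [hDeq, he2, Finset.pair_comm]⟩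
    have hrel' : ∀ r : Fin (n+2), ∑ x ∈ ({f} : Finset (ColIdx (n+4))), lam x * Lm (n+4) r x = 0 := by
      intro r
      have hh := h r
      rw [hset, Finset.sum_insert (by simp [Ne.symm hfe]), hle, zero_mul, zero_add] at hh
      exact hh
    have hlf : lam f = 0 := single f lam hrel'
    have hcm : c ∈ ({e, f} : Finset (ColIdx (n+4))) := by rw [← hset]; exact hc
    rcases Finset.mem_insert.mp hcm with h1 | h1
    · rw [h1]; exact hle
    · rw [Finset.mem_singleton.mp h1]; exact hlf

lemma indep_of_small (D : Finset (ColIdx (n+4))) (hD : D.card ≤ 2) :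
    LinearIndependent ℂ (fun i : {a // a ∈ D} => fun r : Fin (n+2) => Lm (n+4) r i.1) := by
  rw [Fintype.linearIndependent_iff]
  intro g hg i
  classical
  set lam : ColIdx (n+4) → ℂ := fun c => if hc : c ∈ D then g ⟨c, hc⟩ else 0 with hlam
  have hgl : ∀ j : {a // a ∈ D}, g j = lam j.1 := by
    intro j; rw [hlam]; simp [j.2]
  have hrel : ∀ r : Fin (n+2), ∑ c ∈ D, lam c * Lm (n+4) r c = 0 := by
    apply (rel_iff D lam).mp
    rw [← hg]
    apply Finset.sum_congr rfl
    intro j _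
    exact congrArg (fun z => z • fun r => Lm (n+4) r j.1) (hgl j).symm
  rw [hgl i]
  exact lam_zero_of_small D hD lam hrel i.1 i.2

lemma circuit_card (C : Finset (ColIdx (n+4))) (hC : IsCircuit ℂ (Lm (n+4)) C) :
    3 ≤ C.card := by
  by_contra hcon
  exact hC.1 (indep_of_small C (by omega))

lemma circuit_rel (C : Finset (ColIdx (n+4))) (hC : IsCircuit ℂ (Lm (n+4)) C) :
    ∃ lam : ColIdx (n+4) → ℂ, (∀ c ∈ C, lam c ≠ 0) ∧
      ∀ r : Fin (n+2), ∑ c ∈ C, lam c * Lm (n+4) r c = 0 := by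
  classical
  obtain ⟨g, hg, i0, hi0⟩ := Fintype.not_linearIndependent_iff.mp hC.1
  set lam : ColIdx (n+4) → ℂ := fun c => if hc : c ∈ C then g ⟨c, hc⟩ else 0 with hlam
  have hgl : ∀ j : {a // a ∈ C}, g j = lam j.1 := by
    intro j; rw [hlam]; simp [j.2]
  have hrel : ∀ r : Fin (n+2), ∑ c ∈ C, lam c * Lm (n+4) r c = 0 := by
    apply (rel_iff C lam).mp
    rw [← hg]
    apply Finset.sum_congr rfl
    intro j _
    exact congrArg (fun z => z • fun r => Lm (n+4) r j.1) (hgl j).symm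
  set D : Finset (ColIdx (n+4)) := C.filter (fun c => lam c ≠ 0) with hDdef
  have hDC : D ⊆ C := Finset.filter_subset _ _
  have hDeq : D = C := by
    by_contra hne
    have hss : D ⊂ C := Finset.ssubset_iff_subset_ne.mpr ⟨hDC, hne⟩
    have hind := hC.2 D hss
    rw [Fintype.linearIndependent_iff] at hind
    have hrelD : ∀ r : Fin (n+2), ∑ c ∈ D, lam c * Lm (n+4) r c = 0 := by
      intro r
      rw [← hrel r]
      apply Finset.sum_subset hDC
      intro x hx hxD
      have : lam x = 0 := by
        by_contra hxx
        exact hxD (Finset.mem_filter.mpr ⟨hx, hxx⟩)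
      rw [this, zero_mul]
    have hzero := hind (fun j => lam j.1) ((rel_iff D lam).mpr hrelD)
    have : lam i0.1 ≠ 0 := by rw [← hgl i0]; exact hi0
    rcases em (i0.1 ∈ D) with hmem | hmem
    · exact this (hzero ⟨i0.1, hmem⟩)
    · exact hmem (Finset.mem_filter.mpr ⟨i0.2, this⟩)
  refine ⟨lam, ?_, hrel⟩
  intro c hc
  have : c ∈ D := by rw [hDeq]; exact hc
  exact (Finset.mem_filter.mp this).2

/-- Every broken circuit contains two distinct columns with the same first label. -/
lemma bc_pair (C : Finset (ColIdx (n+4))) (i : ColIdx (n+4))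
    (hC : IsCircuit ℂ (Lm (n+4)) C) (hi : i ∈ C)
    (hmin : ∀ j ∈ C, j ≠ i → colBefore j i) :
    ∃ c ∈ C.erase i, ∃ c' ∈ C.erase i, c ≠ c' ∧ c.1.1 = c'.1.1 := by
  obtain ⟨lam, hne, hrel⟩ := circuit_rel C hC
  have hCne : C.Nonempty := ⟨i, hi⟩
  have himg : (C.image (fun c => c.1.1)).Nonempty := hCne.image _
  set u : Fin (n+4-1) := (C.image (fun c => c.1.1)).min' himg with hu
  obtain ⟨c1, hc1, hc1u⟩ := Finset.mem_image.mp ((C.image (fun c => c.1.1)).min'_mem himg)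
  have hu_le : ∀ c ∈ C, u ≤ c.1.1 := fun c hc =>
    Finset.min'_le _ _ (Finset.mem_image_of_mem _ hc)
  -- the top vertex i.1.2 has a second incident column
  have h2 : ∃ c2 ∈ C, c2 ≠ i ∧ (c2.1.1 = i.1.2 ∨ c2.1.2 = i.1.2) := by
    by_contra hcon
    push_neg at hcon
    have huniq : ∀ c ∈ C, (c.1.1 = i.1.2 ∨ c.1.2 = i.1.2) → c = i := by
      intro c hc hinc
      by_contra hne2
      exact (hcon c hc hne2).1 ((or_iff_left (hcon c hc hne2).2).mp hinc)
    exact hne i hi (deg_one C lam hrel i.1.2 i (by exact hi) (Or.inr rfl) huniq)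
  obtain ⟨c2, hc2, hc2ne, hc2inc⟩ := h2
  have hub : (u : ℕ) < (i.1.1 : ℕ) := by
    have hcb := hmin c2 hc2 hc2ne
    rcases hc2inc with hinc | hinc
    · -- c2.1.1 = i.1.2 impossible
      exfalso
      have h1 : (c2.1.1 : ℕ) = (i.1.2 : ℕ) := congrArg Fin.val hinc
      have h2' := col_a_lt_b c2
      rcases hcb with hlt | ⟨heq, _⟩
      · have : (c2.1.2 : ℕ) < (i.1.2 : ℕ) := hlt
        omega
      · have : (c2.1.2 : ℕ) = (i.1.2 : ℕ) := congrArg Fin.val heq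
        omega
    · have h1 : (c2.1.2 : ℕ) = (i.1.2 : ℕ) := congrArg Fin.val hinc
      rcases hcb with hlt | ⟨_, hlt⟩
      · exact absurd (show (c2.1.2 : ℕ) < (i.1.2 : ℕ) from hlt) (by omega)
      · have hle2 : (u : ℕ) ≤ (c2.1.1 : ℕ) := hu_le c2 hc2
        have : (c2.1.1 : ℕ) < (i.1.1 : ℕ) := hlt
        omega
  have hc1ne : c1 ≠ i := by
    intro hcc
    have : (c1.1.1 : ℕ) = (i.1.1 : ℕ) := by rw [hcc]
    have : (c1.1.1 : ℕ) = (u : ℕ) := congrArg Fin.val hc1u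
    omega
  -- the bottom vertex u has a second incident column
  have h3 : ∃ c3 ∈ C, c3 ≠ c1 ∧ (c3.1.1 = u ∨ c3.1.2 = u) := by
    by_contra hcon
    push_neg at hcon
    have huniq : ∀ c ∈ C, (c.1.1 = u ∨ c.1.2 = u) → c = c1 := by
      intro c hc hinc
      by_contra hne2
      exact (hcon c hc hne2).1 ((or_iff_left (hcon c hc hne2).2).mp hinc)
    exact hne c1 hc1 (deg_one C lam hrel u c1 hc1 (Or.inl hc1u) huniq)
  obtain ⟨c3, hc3, hc3ne, hc3inc⟩ := h3
  have hc3a : c3.1.1 = u := by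
    rcases hc3inc with h | h
    · exact h
    · exfalso
      have h1 : (c3.1.2 : ℕ) = (u : ℕ) := congrArg Fin.val h
      have h2' := col_a_lt_b c3
      have h3' : (u : ℕ) ≤ (c3.1.1 : ℕ) := hu_le c3 hc3
      omega
  have hc3ni : c3 ≠ i := by
    intro hcc
    have h1 : (c3.1.1 : ℕ) = (i.1.1 : ℕ) := by rw [hcc]
    have h2' : (c3.1.1 : ℕ) = (u : ℕ) := congrArg Fin.val hc3a
    omega
  refine ⟨c1, Finset.mem_erase.mpr ⟨hc1ne, hc1⟩, c3, Finset.mem_erase.mpr ⟨hc3ni, hc3⟩,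
    Ne.symm hc3ne, ?_⟩
  rw [hc1u, hc3a]

lemma col_b_pos (c : ColIdx (n+4)) : 1 ≤ (c.1.2 : ℕ) := by
  have := col_a_lt_b c; omega

/-- A pair of distinct columns with the same first label is a broken circuit. -/
lemma pair_isBC (c c' : ColIdx (n+4)) (hne : c ≠ c') (hlab : c.1.1 = c'.1.1) :
    IsBC (n+4) {c, c'} := by
  -- reduce to the case c.1.2 < c'.1.2
  have key : ∀ x y : ColIdx (n+4), x.1.1 = y.1.1 → (x.1.2 : ℕ) < (y.1.2 : ℕ) →
      IsBC (n+4) {x, y} := by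
    intro x y hl hb
    have hxy : x ≠ y := by
      intro hh
      rw [hh] at hb
      omega
    -- the third edge
    have hy1 : ¬((x.1.2 : ℕ) = 0 ∧ (y.1.2 : ℕ) = 1) := by
      have := col_b_pos x
      omega
    set e : ColIdx (n+4) := ⟨(x.1.2, y.1.2), ⟨Fin.mk_lt_mk.mp (by exact hb), hy1⟩⟩ with he
    have hax := col_a_lt_b x
    have hay := col_a_lt_b y
    have hexa : (e.1.1 : ℕ) = (x.1.2 : ℕ) := rfl
    have hexb : (e.1.2 : ℕ) = (y.1.2 : ℕ) := rfl
    have hlv : (x.1.1 : ℕ) = (y.1.1 : ℕ) := congrArg Fin.val hl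
    have hex : e ≠ x := by
      intro hh
      have : (e.1.1 : ℕ) = (x.1.1 : ℕ) := by rw [hh]
      omega
    have hey : e ≠ y := by
      intro hh
      have : (e.1.1 : ℕ) = (y.1.1 : ℕ) := by rw [hh]
      omega
    set C : Finset (ColIdx (n+4)) := {x, y, e} with hC
    have hxm : x ∈ C := by simp [hC]
    have hym : y ∈ C := by simp [hC]
    have hem : e ∈ C := by simp [hC]
    have hCcard : C.card = 3 := by
      rw [hC]
      rw [Finset.card_insert_of_notMem (by simp [hxy, Ne.symm hex]),
        Finset.card_insert_of_notMem (by simp [Ne.symm hey]), Finset.card_singleton]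
    have hsum0 : ∀ r : Fin (n+2),
        Lm (n+4) r x * 1 + (Lm (n+4) r y * (-1) + Lm (n+4) r e * 1) = 0 := by
      intro r
      simp only [Lm_apply]
      rw [show (x.1.1 : ℕ) = (y.1.1 : ℕ) from hlv, hexa, hexb]
      ring
    have hdep : ¬ LinearIndependent ℂ (fun i : {a // a ∈ C} => fun r => Lm (n+4) r i.1) := by
      rw [Fintype.not_linearIndependent_iff]
      classical
      refine ⟨fun i => if i.1 = y then -1 else 1, ?_, ⟨⟨x, hxm⟩, by simp [hxy]⟩⟩
      have : ∑ i : {a // a ∈ C}, (if i.1 = y then (-1:ℂ) else 1) • (fun r => Lm (n+4) r i.1)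
          = ∑ c'' ∈ C, (if c'' = y then (-1:ℂ) else 1) • (fun r => Lm (n+4) r c'') :=
        Finset.sum_coe_sort C (fun c'' => (if c'' = y then (-1:ℂ) else 1) • (fun r => Lm (n+4) r c''))
      rw [this, hC]
      rw [Finset.sum_insert (by simp [hxy, Ne.symm hex]),
        Finset.sum_insert (by simp [Ne.symm hey]), Finset.sum_singleton]
      rw [if_neg hxy, if_pos rfl, if_neg hey]
      funext r
      simp only [Pi.add_apply, Pi.smul_apply, Pi.zero_apply, smul_eq_mul]
      have := hsum0 r
      ring_nf
      ring_nf at this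
      linear_combination this
    have hcirc : IsCircuit ℂ (Lm (n+4)) C := by
      refine ⟨hdep, ?_⟩
      intro D hD
      apply indep_of_small
      have := Finset.card_lt_card hD
      omega
    refine ⟨C, e, hcirc, hem, ?_, ?_⟩
    · intro j hj hjne
      rw [hC] at hj
      rcases Finset.mem_insert.mp hj with h1 | hj2
      · left
        rw [h1]
        exact Fin.lt_def.mpr hb
      · rcases Finset.mem_insert.mp hj2 with h1 | hj3
        · right
          rw [h1]
          exact ⟨rfl, Fin.lt_def.mpr (by omega)⟩
        · exact absurd (Finset.mem_singleton.mp hj3) hjne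
    · -- erase
      rw [hC]
      ext z
      simp only [Finset.mem_erase, Finset.mem_insert, Finset.mem_singleton]
      constructor
      · intro hmem
        rcases hmem with h1 | h1
        · exact ⟨by rw [h1]; exact Ne.symm hex, Or.inl h1⟩
        · exact ⟨by rw [h1]; exact Ne.symm hey, Or.inr (Or.inl h1)⟩
      · intro hmem
        obtain ⟨hz, h1⟩ := hmem
        rcases h1 with h1 | h1 | h1
        · exact Or.inl h1
        · exact Or.inr h1
        · exact absurd h1 hz
  have hbb : (c.1.2 : ℕ) ≠ (c'.1.2 : ℕ) := by
    intro hh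
    apply hne
    apply Subtype.ext
    exact Prod.ext hlab (Fin.ext hh)
  rcases Nat.lt_or_ge (c.1.2 : ℕ) (c'.1.2 : ℕ) with hlt | hge
  · exact key c c' hlab hlt
  · rw [Finset.pair_comm]
    exact key c' c hlab.symm (by omega)

lemma isBC_two_le (B : Finset (ColIdx (n+4))) (h : IsBC (n+4) B) : 2 ≤ B.card := by
  obtain ⟨C, i, hC, hi, _, hB⟩ := h
  have h3 := circuit_card C hC
  rw [hB, Finset.card_erase_of_mem hi]
  omega

lemma pair_isMinBC (c c' : ColIdx (n+4)) (hne : c ≠ c') (hlab : c.1.1 = c'.1.1) :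
    IsMinBC (n+4) {c, c'} := by
  refine ⟨pair_isBC c c' hne hlab, ?_⟩
  intro B' hB' hsub
  apply Finset.eq_of_subset_of_card_le hsub
  rw [Finset.card_pair hne]
  exact isBC_two_le B' hB'

/-- Part 1 of the statement. -/
lemma part1 (B : Finset (ColIdx (n+4))) (h : IsBC (n+4) B) :
    ∃ B' ⊆ B, IsMinBC (n+4) B' ∧ B'.card = 2 := by
  obtain ⟨C, i, hC, hi, hmin, hB⟩ := h
  obtain ⟨c, hc, c', hc', hne, hlab⟩ := bc_pair C i hC hi hmin
  refine ⟨{c, c'}, ?_, pair_isMinBC c c' hne hlab, Finset.card_pair hne⟩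
  intro z hz
  rw [hB]
  rcases Finset.mem_insert.mp hz with h1 | h1
  · rw [h1]; exact hc
  · rw [Finset.mem_singleton.mp h1]; exact hc'

/-- Part 2 of the statement. -/
lemma part2 (B : Finset (ColIdx (n+4))) :
    IsMinBC (n+4) B ↔ ∃ c c' : ColIdx (n+4), c ≠ c' ∧ c.1.1 = c'.1.1 ∧ B = {c, c'} := by
  constructor
  · intro h
    obtain ⟨C, i, hC, hi, hmin, hB⟩ := h.1
    obtain ⟨c, hc, c', hc', hne, hlab⟩ := bc_pair C i hC hi hmin
    have hsub : ({c, c'} : Finset (ColIdx (n+4))) ⊆ B := by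
      intro z hz
      rw [hB]
      rcases Finset.mem_insert.mp hz with h1 | h1
      · rw [h1]; exact hc
      · rw [Finset.mem_singleton.mp h1]; exact hc'
    exact ⟨c, c', hne, hlab, (h.2 {c, c'} (pair_isBC c c' hne hlab) hsub).symm⟩
  · rintro ⟨c, c', hne, hlab, rfl⟩
    exact pair_isMinBC c c' hne hlab

lemma mwIndep_iff_injOn (S : Finset (ColIdx (n+4))) :
    MwIndepLm (n+4) S ↔ Set.InjOn (fun c : ColIdx (n+4) => c.1.1) ↑S := by
  constructor
  · intro hind c hc c' hc' heq
    by_contra hne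
    apply hind {c, c'} (pair_isMinBC c c' hne heq)
    intro z hz
    rcases Finset.mem_insert.mp hz with h1 | h1
    · rw [h1]; exact hc
    · rw [Finset.mem_singleton.mp h1]; exact hc'
  · intro hinj B hB hsub
    obtain ⟨c, c', hne, hlab, rfl⟩ := (part2 B).mp hB
    have hc : c ∈ S := hsub (by simp)
    have hc' : c' ∈ S := hsub (by simp)
    exact hne (hinj hc hc' hlab)

lemma injOn_iff_linIndep (S : Finset (ColIdx (n+4))) :
    Set.InjOn (fun c : ColIdx (n+4) => c.1.1) ↑S ↔
      LinearIndependent ℂ (fun c : {a // a ∈ S} => reprVec (n+4) c.1) := by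
  constructor
  · intro hinj
    rw [Fintype.linearIndependent_iff]
    intro g hg i0
    have hval := congrFun hg (⟨(i0.1.1.1 : ℕ), col_a_lt i0.1⟩ : Fin (n+2))
    rw [Finset.sum_apply] at hval
    simp only [Pi.smul_apply, Pi.zero_apply, smul_eq_mul] at hval
    rw [Finset.sum_eq_single i0] at hval
    · rw [reprVec] at hval
      simp at hval
      exact hval
    · intro j _ hji
      have hne : ¬ ((i0.1.1.1 : ℕ) = (j.1.1.1 : ℕ)) := by
        intro heq
        apply hji
        apply Subtype.ext
        exact hinj j.2 i0.2 (Fin.ext heq.symm)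
      rw [reprVec]
      simp only [mul_eq_zero]
      right
      rw [if_neg (by simpa using hne)]
    · intro habs
      exact absurd (Finset.mem_univ i0) habs
  · intro hli c hc c' hc' heq
    have hrv : reprVec (n+4) c = reprVec (n+4) c' := by
      funext r
      rw [reprVec, reprVec]
      have : (c.1.1 : ℕ) = (c'.1.1 : ℕ) := congrArg Fin.val heq
      rw [this]
    have := hli.injective (a₁ := ⟨c, hc⟩) (a₂ := ⟨c', hc'⟩) hrv
    exact congrArg Subtype.val this

/-- Part 3 of the statement. -/
lemma part3 (S : Finset (ColIdx (n+4))) :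
    MwIndepLm (n+4) S ↔ LinearIndependent ℂ (fun c : {a // a ∈ S} => reprVec (n+4) c.1) :=
  (mwIndep_iff_injOn S).trans (injOn_iff_linIndep S)

lemma exists_col (t : Fin (n+3)) (ht : (t : ℕ) < n+2) :
    ∃ c : ColIdx (n+4), c.1.1 = t := by
  rcases Nat.eq_zero_or_pos (t : ℕ) with h0 | h0
  · refine ⟨⟨(t, ⟨2, by omega⟩), ?_, ?_⟩, rfl⟩
    · exact Fin.lt_def.mpr (by simp; omega)
    · simp
  · refine ⟨⟨(t, ⟨(t : ℕ)+1, by omega⟩), ?_, ?_⟩, rfl⟩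
    · exact Fin.lt_def.mpr (by simp)
    · intro hcon
      exact (Nat.pos_iff_ne_zero.mp h0) hcon.1

/-- Part 4 of the statement. -/
lemma part4 (B : Finset (ColIdx (n+4))) :
    MwBasisLm (n+4) B ↔
      (Set.InjOn (fun c : ColIdx (n+4) => c.1.1) ↑B ∧
        (fun c : ColIdx (n+4) => c.1.1) '' ↑B = {t : Fin (n+3) | (t : ℕ) < n+2}) := by
  constructor
  · intro ⟨hind, hmax⟩
    have hinj := (mwIndep_iff_injOn B).mp hind
    refine ⟨hinj, ?_⟩
    apply Set.eq_of_subset_of_subset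
    · rintro t ⟨c, _, rfl⟩
      exact col_a_lt c
    · intro t ht
      by_contra hni
      obtain ⟨c0, hc0⟩ := exists_col t ht
      have hc0nB : c0 ∉ B := by
        intro hmem
        exact hni ⟨c0, hmem, hc0⟩
      have hSind : MwIndepLm (n+4) (insert c0 B) := by
        rw [mwIndep_iff_injOn]
        intro x hx y hy heq
        rw [Finset.coe_insert] at hx hy
        rcases Set.mem_insert_iff.mp hx with rfl | hx2
        · rcases Set.mem_insert_iff.mp hy with rfl | hy2
          · rfl
          · exfalso; apply hni; exact ⟨y, hy2, heq.symm.trans hc0⟩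
        · rcases Set.mem_insert_iff.mp hy with rfl | hy2
          · exfalso; apply hni; exact ⟨x, hx2, heq.trans hc0⟩
          · exact hinj hx2 hy2 heq
      have := hmax (insert c0 B) hSind (Finset.subset_insert c0 B)
      rw [← this] at hc0nB
      exact hc0nB (Finset.mem_insert_self c0 B)
  · intro ⟨hinj, himg⟩
    refine ⟨(mwIndep_iff_injOn B).mpr hinj, ?_⟩
    intro S hS hBS
    have hSinj := (mwIndep_iff_injOn S).mp hS
    apply Finset.Subset.antisymm _ hBS
    intro c hc
    have : c.1.1 ∈ {t : Fin (n+3) | (t : ℕ) < n+2} := col_a_lt c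
    rw [← himg] at this
    obtain ⟨b, hb, hlab⟩ := this
    have : c = b := hSinj hc (hBS hb) (by rw [hlab])
    rw [this]
    exact hb

/-- The columns with first label `t0`, via their second label. -/
def colFiberEquiv (t0 : Fin (n+3)) :
    {c : ColIdx (n+4) // c.1.1 = t0} ≃
      {b : Fin (n+3) // t0 < b ∧ ¬((t0 : ℕ) = 0 ∧ (b : ℕ) = 1)} where
  toFun c := ⟨c.1.1.2, by
    obtain ⟨⟨⟨a, b⟩, hlt, hne⟩, hlab⟩ := c
    simp only at hlab ⊢
    rw [← hlab]
    exact ⟨hlt, hne⟩⟩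
  invFun b := ⟨⟨(t0, b.1), b.2.1, b.2.2⟩, rfl⟩
  left_inv := by
    intro c
    apply Subtype.ext
    apply Subtype.ext
    exact Prod.ext c.2.symm rfl
  right_inv := by intro b; rfl

/-- Final segments of `Fin N`. -/
def tailEquiv (N lo : ℕ) : {b : Fin N // lo ≤ (b : ℕ)} ≃ Fin (N - lo) where
  toFun b := ⟨(b : ℕ) - lo, by have := b.1.isLt; omega⟩
  invFun j := ⟨⟨(j : ℕ) + lo, by have := j.isLt; omega⟩, by simp only [Fin.val_mk]; omega⟩
  left_inv := by
    intro b
    apply Subtype.ext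
    apply Fin.ext
    have := b.2
    simp only [Fin.val_mk]
    omega
  right_inv := by
    intro j
    apply Fin.ext
    simp only [Fin.val_mk]
    omega

lemma fiber_card (t0 : Fin (n+3)) :
    Nat.card {c : ColIdx (n+4) // c.1.1 = t0}
      = if (t0 : ℕ) = 0 then n+1 else n+3-((t0 : ℕ)+1) := by
  set lo : ℕ := if (t0 : ℕ) = 0 then 2 else (t0 : ℕ)+1 with hlo
  have hiff : ∀ b : Fin (n+3), (t0 < b ∧ ¬((t0 : ℕ) = 0 ∧ (b : ℕ) = 1)) ↔ lo ≤ (b : ℕ) := by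
    intro b
    constructor
    · rintro ⟨h1, h2⟩
      have h1' : (t0 : ℕ) < (b : ℕ) := Fin.lt_def.mp h1
      rw [hlo]
      rcases em ((t0 : ℕ) = 0) with h | h
      · rw [if_pos h]
        rcases Nat.lt_or_ge (b : ℕ) 2 with hb | hb
        · exact absurd ⟨h, by omega⟩ h2
        · exact hb
      · rw [if_neg h]
        omega
    · intro h1
      rw [hlo] at h1
      rcases em ((t0 : ℕ) = 0) with h | h
      · rw [if_pos h] at h1
        exact ⟨Fin.lt_def.mpr (by omega), by omega⟩
      · rw [if_neg h] at h1
        exact ⟨Fin.lt_def.mpr (by omega), fun hc => h hc.1⟩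
  rw [Nat.card_congr (((colFiberEquiv t0).trans (Equiv.subtypeEquivRight hiff)).trans
    (tailEquiv (n+3) lo)), Nat.card_eq_fintype_card, Fintype.card_fin]
  rw [hlo]
  rcases em ((t0 : ℕ) = 0) with h | h
  · rw [if_pos h, if_pos h]
    omega
  · rw [if_neg h, if_neg h]


lemma prod_desc (N : ℕ) : ∏ i ∈ Finset.range N, (N - i) = Nat.factorial N := by
  induction N with
  | zero => simp
  | succ k ih =>
    rw [Finset.prod_range_succ' (fun i => k + 1 - i) k]
    have h1 : ∀ i, k + 1 - (i + 1) = k - i := fun i => by omega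
    simp only [h1, Nat.sub_zero, ih]
    rw [Nat.factorial_succ, Nat.mul_comm]

lemma part5 :
    {B : Finset (ColIdx (n+4)) | MwBasisLm (n+4) B}.ncard = (n+1) * Nat.factorial (n+1) := by
  classical
  have hset : {B : Finset (ColIdx (n+4)) | MwBasisLm (n+4) B}
      = {B : Finset (ColIdx (n+4)) | Set.InjOn (fun c : ColIdx (n+4) => c.1.1) ↑B ∧
          (fun c : ColIdx (n+4) => c.1.1) '' ↑B = {t : Fin (n+3) | (t : ℕ) < n+2}} :=
    Set.ext (fun B => part4 B)
  rw [hset, ← Nat.card_coe_set_eq]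
  set castT : Fin (n+2) → Fin (n+3) := Fin.castLE (by omega) with hcastT
  have hcastT_val : ∀ t : Fin (n+2), ((castT t : Fin (n+3)) : ℕ) = (t : ℕ) := fun t => rfl
  have hcastT_inj : Function.Injective castT := by
    intro a b h
    have h2 : ((castT a : Fin (n+3)) : ℕ) = ((castT b : Fin (n+3)) : ℕ) := congrArg Fin.val h
    exact Fin.ext h2
  -- the bijection with systems of representatives
  set F : (∀ t : Fin (n+2), {c : ColIdx (n+4) // c.1.1 = castT t}) →
      ↥{B : Finset (ColIdx (n+4)) | Set.InjOn (fun c : ColIdx (n+4) => c.1.1) ↑B ∧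
          (fun c : ColIdx (n+4) => c.1.1) '' ↑B = {t : Fin (n+3) | (t : ℕ) < n+2}} :=
    fun f => ⟨Finset.image (fun t => (f t).1) Finset.univ, by
      constructor
      · intro x hx y hy heq
        rw [Finset.coe_image] at hx hy
        obtain ⟨t, _, rfl⟩ := hx
        obtain ⟨t', _, rfl⟩ := hy
        have : castT t = castT t' := by
          rw [← (f t).2, ← (f t').2]
          exact heq
        rw [hcastT_inj this]
      · apply Set.eq_of_subset_of_subset
        · rintro s ⟨c, hc, rfl⟩
          exact col_a_lt c
        · intro s hs
          have hs2 : (s : ℕ) < n+2 := hs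
          refine ⟨(f ⟨(s : ℕ), hs2⟩).1, ?_, ?_⟩
          · rw [Finset.coe_image]
            exact ⟨⟨(s : ℕ), hs2⟩, Finset.mem_coe.mpr (Finset.mem_univ _), rfl⟩
          · show ((f ⟨(s : ℕ), hs2⟩).1).1.1 = s
            rw [(f ⟨(s : ℕ), hs2⟩).2]
            exact Fin.ext (hcastT_val _)⟩ with hF
  have hbij : Function.Bijective F := by
    constructor
    · intro f f' heq
      have heqB : Finset.image (fun t => (f t).1) Finset.univ
          = Finset.image (fun t => (f' t).1) Finset.univ := congrArg Subtype.val heq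
      funext t
      have hmem : (f t).1 ∈ Finset.image (fun t => (f' t).1) Finset.univ := by
        rw [← heqB]
        exact Finset.mem_image_of_mem _ (Finset.mem_univ t)
      obtain ⟨t', _, ht'⟩ := Finset.mem_image.mp hmem
      have : castT t' = castT t := by
        rw [← (f t).2, ← (f' t').2, ht']
      apply Subtype.ext
      rw [← ht', hcastT_inj this]
    · rintro ⟨B, hinj, himg⟩
      have hrep : ∀ t : Fin (n+2), ∃ c : ColIdx (n+4), c ∈ B ∧ c.1.1 = castT t := by
        intro t
        have : (castT t) ∈ {s : Fin (n+3) | (s : ℕ) < n+2} := by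
          show ((castT t : Fin (n+3)) : ℕ) < n+2
          rw [hcastT_val]
          exact t.isLt
        rw [← himg] at this
        obtain ⟨c, hc, hlab⟩ := this
        exact ⟨c, hc, hlab⟩
      refine ⟨fun t => ⟨(hrep t).choose, (hrep t).choose_spec.2⟩, ?_⟩
      apply Subtype.ext
      show Finset.image _ Finset.univ = B
      apply Finset.Subset.antisymm
      · intro z hz
        obtain ⟨t, _, rfl⟩ := Finset.mem_image.mp hz
        exact (hrep t).choose_spec.1
      · intro z hz
        have hzlt : (z.1.1 : ℕ) < n+2 := col_a_lt z
        set t : Fin (n+2) := ⟨(z.1.1 : ℕ), hzlt⟩ with ht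
        have hlab : (hrep t).choose.1.1 = z.1.1 := by
          rw [(hrep t).choose_spec.2]
          exact Fin.ext (hcastT_val t)
        have : (hrep t).choose = z := hinj ((hrep t).choose_spec.1) hz hlab
        rw [← this]
        exact Finset.mem_image_of_mem _ (Finset.mem_univ t)
  rw [← Nat.card_congr (Equiv.ofBijective F hbij), Nat.card_pi]
  have hprod : ∀ t : Fin (n+2), Nat.card {c : ColIdx (n+4) // c.1.1 = castT t}
      = if (t : ℕ) = 0 then n+1 else n+3-((t : ℕ)+1) := by
    intro t
    rw [fiber_card (castT t), hcastT_val]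
  rw [Finset.prod_congr rfl (fun t _ => hprod t)]
  rw [Fin.prod_univ_succ]
  have h0 : ((0 : Fin (n+2)) : ℕ) = 0 := rfl
  rw [h0, if_pos rfl]
  have hsucc : ∀ i : Fin (n+1),
      (if ((i.succ : Fin (n+2)) : ℕ) = 0 then n+1 else n+3-(((i.succ : Fin (n+2)) : ℕ)+1))
        = n+1-(i : ℕ) := by
    intro i
    have hv : ((i.succ : Fin (n+2)) : ℕ) = (i : ℕ) + 1 := rfl
    rw [hv, if_neg (by omega)]
    omega
  rw [Finset.prod_congr rfl (fun i _ => hsucc i)]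
  congr 1
  rw [Fin.prod_univ_eq_prod_range (fun i => n+1-i) (n+1)]
  exact prod_desc (n+1)

end Aux19

/-- proof of Proposition 5.1.  For the column order in which later columns
are `ω`-smaller: every broken circuit of `M(L_m)` contains a 2-element minimal broken
circuit; the minimal broken circuits are exactly the pairs of columns
`{e_j − e_i, e_k − e_i}` and `{e_i, e_j}`, i.e. pairs of distinct columns with the same
first label; `M^ω(L_m)` is represented by the block-identity matrix `(a,b) ↦ e_a`; its bases
are the column subsets forming the standard basis `{e_1, …, e_{m-2}}`; and the number of
bases is `(m-3)·(m-3)!`. -/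
theorem broken_circuit_matroid_M0m (m : ℕ) (hm : 4 ≤ m) :
    (∀ B : Finset (ColIdx m), IsBC m B →
      ∃ B' ⊆ B, IsMinBC m B' ∧ B'.card = 2) ∧
    (∀ B : Finset (ColIdx m), IsMinBC m B ↔
      ∃ c c' : ColIdx m, c ≠ c' ∧ c.1.1 = c'.1.1 ∧ B = {c, c'}) ∧
    (∀ S : Finset (ColIdx m), MwIndepLm m S ↔
      LinearIndependent ℂ (fun c : {a // a ∈ S} => reprVec m c.1)) ∧
    (∀ B : Finset (ColIdx m), MwBasisLm m B ↔
      (Set.InjOn (fun c : ColIdx m => c.1.1) ↑B ∧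
        (fun c : ColIdx m => c.1.1) '' ↑B = {t : Fin (m-1) | (t : ℕ) < m-2})) ∧
    {B : Finset (ColIdx m) | MwBasisLm m B}.ncard = (m-3) * Nat.factorial (m-3) := by
  obtain ⟨n, rfl⟩ : ∃ n, m = n + 4 := ⟨m - 4, by omega⟩
  exact ⟨part1, part2, part3, part4, part5⟩

end ScatteringPaper
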